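/- Let A be a Banach algebra, p < 3, and θ > 0. If f: A → A satisfies ‖f(xy) − f(x)f(y)‖ ≤ θ‖y‖^p and ‖f(2x+y) + f(2x−y) − 2f(x+y) − 2f(x−y) − 12f(x)‖ ≤ θ‖y‖^p for all x, y ∈ A, then f is a cubic homomorphism. -/

import Mathlib

/-!
Putting `y = 0` in the cubic inequality kills its right-hand side, so `f (2 • x) = 8 • f x` and hence
`f (2ⁿ • x) = 8ⁿ • f x`. Both defects are therefore homogeneous of degree three under `(x, y) ↦ (2ⁿ • x, 2ⁿ • y)`:
evaluating a bound `θ ‖y‖ᵖ` at `2ⁿ • y` gives `8ⁿ ‖defect‖ ≤ θ 2ⁿᵖ ‖y‖ᵖ`, and since `p < 3` the quotient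
`2ⁿᵖ / 8ⁿ` tends to `0`, forcing every defect to vanish.
-/

open Filter Topology

/-- `pp x p` is `x ^ p` with the convention `0 ^ p = 0` for all `p` (in particular `p ≤ 0`). -/
noncomputable def pp (x p : ℝ) : ℝ := if x = 0 then 0 else x ^ p

lemma pp_zero_left (p : ℝ) : pp 0 p = 0 := if_pos rfl

lemma pp_mul_of_pos {a c : ℝ} (p : ℝ) (ha : 0 < a) (hc : 0 ≤ c) : pp (a * c) p = a ^ p * pp c p := by
  rcases hc.eq_or_lt with rfl | hc
  · simp [pp_zero_left]
  · simp [pp, ha.ne', hc.ne', Real.mul_rpow ha.le hc.le]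

lemma tendsto_pp_two_pow_mul_div_eight_pow {p c : ℝ} (hp : p < 3) (hc : 0 ≤ c) :
    Tendsto (fun n : ℕ => pp ((2:ℝ) ^ n * c) p / 8 ^ n) atTop (𝓝 0) := by
  have hratio : (2:ℝ) ^ p / 8 < 1 := by
    rw [div_lt_one (by norm_num)]
    calc (2:ℝ) ^ p < 2 ^ (3:ℝ) := Real.rpow_lt_rpow_of_exponent_lt (by norm_num) hp
      _ = 8 := by norm_num
  have hterm (n : ℕ) : pp ((2:ℝ) ^ n * c) p / 8 ^ n = pp c p * ((2:ℝ) ^ p / 8) ^ n := by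
    rw [pp_mul_of_pos p (by positivity) hc, ← Real.rpow_pow_comm (by norm_num), div_pow]
    ring
  simp_rw [hterm]
  simpa using (tendsto_pow_atTop_nhds_zero_of_lt_one (by positivity) hratio).const_mul (pp c p)

lemma eq_zero_of_norm_eight_pow_smul_le {E F : Type*} [NormedAddCommGroup E] [NormedSpace ℝ E]
    [SeminormedAddCommGroup F] [NormedSpace ℝ F] {θ p : ℝ} (hp : p < 3) {v : E} (y : F)
    (h : ∀ n : ℕ, ‖(8:ℝ) ^ n • v‖ ≤ θ * pp ‖(2:ℝ) ^ n • y‖ p) : v = 0 := by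
  have hv (n : ℕ) : ‖v‖ ≤ θ * (pp ((2:ℝ) ^ n * ‖y‖) p / 8 ^ n) := by
    have := h n
    rw [norm_smul, norm_smul, Real.norm_of_nonneg (by positivity),
      Real.norm_of_nonneg (by positivity)] at this
    rw [mul_div_assoc', le_div_iff₀ (by positivity)]
    linarith
  have hlim := (tendsto_pp_two_pow_mul_div_eight_pow hp (norm_nonneg y)).const_mul θ
  rw [mul_zero] at hlim
  exact norm_le_zero_iff.mp (ge_of_tendsto' hlim hv)

lemma map_pow_smul_of_map_smul {R M N : Type*} [Monoid R] [MulAction R M] [MulAction R N]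
    {f : M → N} {a b : R} (hf : ∀ x, f (a • x) = b • f x) (n : ℕ) (x : M) :
    f (a ^ n • x) = b ^ n • f x := by
  induction n generalizing x with
  | zero => simp
  | succ n ih => rw [pow_succ, mul_smul, ih, hf, ← mul_smul, ← pow_succ]

section CubicDefect

variable {E F : Type*} [AddCommGroup E] [Module ℝ E] [AddCommGroup F] [Module ℝ F]

def cubicDefect (f : E → F) (x y : E) : F :=
  f ((2:ℝ) • x + y) + f ((2:ℝ) • x - y) - (2:ℝ) • f (x + y) - (2:ℝ) • f (x - y) - (12:ℝ) • f x

lemma map_two_smul_of_cubicDefect_zero_right {f : E → F} (hf : ∀ x, cubicDefect f x 0 = 0)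
    (x : E) : f ((2:ℝ) • x) = (8:ℝ) • f x := by
  have h : (2:ℝ) • (f ((2:ℝ) • x) - (8:ℝ) • f x) = 0 := by
    rw [← hf x, cubicDefect]
    simp only [add_zero, sub_zero]
    module
  rw [smul_eq_zero, sub_eq_zero] at h
  exact h.resolve_left two_ne_zero

lemma cubicDefect_pow_smul {f : E → F} {a b : ℝ} (hf : ∀ x, f (a • x) = b • f x) (n : ℕ)
    (x y : E) : cubicDefect f (a ^ n • x) (a ^ n • y) = b ^ n • cubicDefect f x y := by
  have hpow := map_pow_smul_of_map_smul hf n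
  simp only [cubicDefect]
  rw [smul_comm (2:ℝ) (a ^ n) x, ← smul_add, ← smul_sub, ← smul_add, ← smul_sub]
  simp only [hpow]
  module

end CubicDefect

theorem cubic_superstability_both_powers_general
    {A : Type*} [NormedRing A] [NormedAlgebra ℝ A]
    (f : A → A) (θ p : ℝ) (hp : p < 3)
    (h1 : ∀ x y : A, ‖f (x * y) - f x * f y‖ ≤ θ * pp ‖y‖ p)
    (h2 : ∀ x y : A, ‖f ((2:ℝ) • x + y) + f ((2:ℝ) • x - y)
        - (2:ℝ) • f (x + y) - (2:ℝ) • f (x - y) - (12:ℝ) • f x‖ ≤ θ * pp ‖y‖ p) :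
    (∀ x y : A, f (x * y) = f x * f y) ∧
    (∀ x y : A, f ((2:ℝ) • x + y) + f ((2:ℝ) • x - y)
      = (2:ℝ) • f (x + y) + (2:ℝ) • f (x - y) + (12:ℝ) • f x) := by
  have hdefect (x y : A) : ‖cubicDefect f x y‖ ≤ θ * pp ‖y‖ p := h2 x y
  have hdouble : ∀ x : A, f ((2:ℝ) • x) = (8:ℝ) • f x :=
    map_two_smul_of_cubicDefect_zero_right fun x =>
      norm_le_zero_iff.mp (by simpa [pp_zero_left] using hdefect x 0)
  constructor
  · intro x y
    rw [← sub_eq_zero]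
    refine eq_zero_of_norm_eight_pow_smul_le (θ := θ) hp y fun n => ?_
    have h := h1 x ((2:ℝ) ^ n • y)
    rwa [mul_smul_comm, map_pow_smul_of_map_smul hdouble, map_pow_smul_of_map_smul hdouble,
      mul_smul_comm, ← smul_sub] at h
  · intro x y
    have hzero : cubicDefect f x y = 0 := by
      refine eq_zero_of_norm_eight_pow_smul_le (θ := θ) hp y fun n => ?_
      rw [← cubicDefect_pow_smul hdouble]
      exact hdefect _ _
    rw [cubicDefect] at hzero
    rw [← sub_eq_zero, ← hzero]
    abel

theorem cubic_superstability_both_powers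
    {A : Type*} [NormedRing A] [NormedAlgebra ℝ A] [CompleteSpace A]
    (f : A → A) (θ p : ℝ) (hθ : 0 < θ) (hp : p < 3)
    (h1 : ∀ x y : A, ‖f (x * y) - f x * f y‖ ≤ θ * pp ‖y‖ p)
    (h2 : ∀ x y : A, ‖f ((2:ℝ) • x + y) + f ((2:ℝ) • x - y)
        - (2:ℝ) • f (x + y) - (2:ℝ) • f (x - y) - (12:ℝ) • f x‖ ≤ θ * pp ‖y‖ p) :
    (∀ x y : A, f (x * y) = f x * f y) ∧
    (∀ x y : A, f ((2:ℝ) • x + y) + f ((2:ℝ) • x - y)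
      = (2:ℝ) • f (x + y) + (2:ℝ) • f (x - y) + (12:ℝ) • f x) :=
  cubic_superstability_both_powers_general f θ p hp h1 h2
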